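/- arXiv:1703.06183 — 2 statements merged into one kernel-verified Lean document; each statement's English description precedes it below -/
import Mathlib

section
/- Let ψ ∈ H be a unit vector that is RFTS with respect to a neighborhood structure 𝒩 = {𝒩_1,…,𝒩_K}. Then for every k ∈ {1,…,K}, [Π_k, Π_k̄] = 0, where Π_k is the orthogonal projection of H onto the extended Schmidt span Σ̄_{𝒩_k}(ψ) and Π_k̄ is the orthogonal projection of H onto ⋂_{j≠k} Σ̄_{𝒩_j}(ψ). -/
open scoped BigOperators Matrix ComplexOrder

namespace QLS

variable {N : ℕ}

/-- Index type of the full multipartite Hilbert space `⊗ᵢ ℂ^{d i}`. -/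
abbrev Idx (d : Fin N → ℕ) : Type := ∀ i, Fin (d i)

/-- Index type of the Hilbert space `⊗_{i ∈ S} ℂ^{d i}` of a subset `S` of subsystems. -/
abbrev SIdx (d : Fin N → ℕ) (S : Finset (Fin N)) : Type := ∀ i : S, Fin (d i)

/-- Merge an index on `S` and an index on `Sᶜ` into a global index. -/
def merge (d : Fin N → ℕ) (S : Finset (Fin N)) (u : SIdx d S) (w : SIdx d Sᶜ) : Idx d :=
  fun i => if h : i ∈ S then u ⟨i, h⟩ else w ⟨i, Finset.mem_compl.mpr h⟩

/-- Partial trace over the complement of `S`: `Tr_{Sᶜ}`. -/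
noncomputable def ptrace (d : Fin N → ℕ) (S : Finset (Fin N))
    (M : Matrix (Idx d) (Idx d) ℂ) : Matrix (SIdx d S) (SIdx d S) ℂ :=
  fun u v => ∑ w : SIdx d Sᶜ, M (merge d S u w) (merge d S v w)

/-- `X` acts only on the subsystems in `S`, i.e. `X = Y ⊗ I_{Sᶜ}`. -/
def ActsOn (d : Fin N → ℕ) (S : Finset (Fin N)) (X : Matrix (Idx d) (Idx d) ℂ) : Prop :=
  ∃ Y : Matrix (SIdx d S) (SIdx d S) ℂ, ∀ (u u' : SIdx d S) (w w' : SIdx d Sᶜ),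
    X (merge d S u w) (merge d S u' w') = if w = w' then Y u u' else 0

/-- The rank-one projector `|ψ⟩⟨ψ|`. -/
noncomputable def proj (d : Fin N → ℕ) (ψ : Idx d → ℂ) : Matrix (Idx d) (Idx d) ℂ :=
  fun a b => ψ a * (starRingEnd ℂ) (ψ b)

/-- `ψ` is a unit vector. -/
def IsUnitVec (d : Fin N → ℕ) (ψ : Idx d → ℂ) : Prop :=
  ∑ a, Complex.normSq (ψ a) = 1

/-- Superoperators on the multipartite space. -/
abbrev Sop (d : Fin N → ℕ) : Type :=
  Matrix (Idx d) (Idx d) ℂ →ₗ[ℂ] Matrix (Idx d) (Idx d) ℂ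

/-- `E` is completely positive and trace preserving (Kraus form). -/
def IsCPTP (d : Fin N → ℕ) (E : Sop d) : Prop :=
  ∃ (m : ℕ) (K : Fin m → Matrix (Idx d) (Idx d) ℂ),
    (∀ ρ, E ρ = ∑ i, K i * ρ * (K i)ᴴ) ∧ (∑ i, (K i)ᴴ * K i = 1)

/-- `E` is a CPTP map whose Kraus operators all act only on `S`. -/
def IsNeighborhoodMap (d : Fin N → ℕ) (S : Finset (Fin N)) (E : Sop d) : Prop :=
  ∃ (m : ℕ) (K : Fin m → Matrix (Idx d) (Idx d) ℂ),
    (∀ i, ActsOn d S (K i)) ∧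
    (∀ ρ, E ρ = ∑ i, K i * ρ * (K i)ᴴ) ∧ (∑ i, (K i)ᴴ * K i = 1)

/-- A density matrix. -/
def IsDensity (d : Fin N → ℕ) (ρ : Matrix (Idx d) (Idx d) ℂ) : Prop :=
  ρ.PosSemidef ∧ ρ.trace = 1

/-- Sequential composition `E_{T-1} ∘ ⋯ ∘ E_1 ∘ E_0` (index `0` applied first). -/
def seqComp {V : Type*} [AddCommMonoid V] [Module ℂ V] :
    ∀ {T : ℕ}, (Fin T → (V →ₗ[ℂ] V)) → (V →ₗ[ℂ] V)
  | 0, _ => LinearMap.id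
  | T + 1, E => E (Fin.last T) ∘ₗ seqComp fun t => E t.castSucc

/-- Finite-time stabilizability of `ψ` w.r.t. the neighborhood structure `𝒩`. -/
def FTS (d : Fin N → ℕ) {K : ℕ} (𝒩 : Fin K → Finset (Fin N)) (ψ : Idx d → ℂ) : Prop :=
  ∃ (T : ℕ) (E : Fin T → Sop d),
    (∀ t, ∃ k, IsNeighborhoodMap d (𝒩 k) (E t)) ∧
    (∀ t, E t (proj d ψ) = proj d ψ) ∧
    (∀ σ, IsDensity d σ → seqComp E σ = proj d ψ)

/-- Robust finite-time stabilizability: any ordering of the maps prepares `ψ`. -/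
def RFTS (d : Fin N → ℕ) {K : ℕ} (𝒩 : Fin K → Finset (Fin N)) (ψ : Idx d → ℂ) : Prop :=
  ∃ (T : ℕ) (E : Fin T → Sop d),
    (∀ t, ∃ k, IsNeighborhoodMap d (𝒩 k) (E t)) ∧
    (∀ t, E t (proj d ψ) = proj d ψ) ∧
    (∀ π : Equiv.Perm (Fin T), ∀ σ, IsDensity d σ → seqComp (fun t => E (π t)) σ = proj d ψ)

/-- The Schmidt span of `ψ` on `S`: the range of the reduced state `Tr_{Sᶜ}|ψ⟩⟨ψ|`. -/
noncomputable def schmidtSpan (d : Fin N → ℕ) (S : Finset (Fin N)) (ψ : Idx d → ℂ) :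
    Submodule ℂ (SIdx d S → ℂ) :=
  LinearMap.range (Matrix.mulVecLin (ptrace d S (proj d ψ)))

/-- Slicing a global vector along a fixed index of `Sᶜ` (linear in the vector). -/
def sliceMap (d : Fin N → ℕ) (S : Finset (Fin N)) (w : SIdx d Sᶜ) :
    (Idx d → ℂ) →ₗ[ℂ] (SIdx d S → ℂ) where
  toFun v := fun u => v (merge d S u w)
  map_add' _ _ := rfl
  map_smul' _ _ := rfl

/-- The extended Schmidt span `Σ̄_S(ψ) = Σ_S(ψ) ⊗ H_{Sᶜ}`, described as the set of vectors
all of whose slices along `Sᶜ` lie in the Schmidt span. -/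
noncomputable def extSchmidtSpan (d : Fin N → ℕ) (S : Finset (Fin N)) (ψ : Idx d → ℂ) :
    Submodule ℂ (Idx d → ℂ) :=
  ⨅ w : SIdx d Sᶜ, (schmidtSpan d S ψ).comap (sliceMap d S w)

/-- `P` is the orthogonal projection matrix onto the subspace `V` (Hermitian idempotent
with range `V`). -/
def IsOrthProjOnto {ι : Type*} [Fintype ι] [DecidableEq ι]
    (P : Matrix ι ι ℂ) (V : Submodule ℂ (ι → ℂ)) : Prop :=
  Pᴴ = P ∧ P * P = P ∧ LinearMap.range P.mulVecLin = V

/-- The neighborhood expansion `A^𝒩` of a set of subsystems. -/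
def expand {K : ℕ} (𝒩 : Fin K → Finset (Fin N)) (A : Finset (Fin N)) : Finset (Fin N) :=
  Finset.univ.biUnion fun k => if (𝒩 k ∩ A).Nonempty then 𝒩 k else ∅

/-- Standard sesquilinear dot product. -/
noncomputable def dotc {ι : Type*} [Fintype ι] (u v : ι → ℂ) : ℂ :=
  ∑ a, (starRingEnd ℂ) (u a) * v a

/-- Slicing a global vector along a single site `i`, other coordinates fixed by `a`. -/
def sliceAt (d : Fin N → ℕ) (i : Fin N) (a : Idx d) :
    (Idx d → ℂ) →ₗ[ℂ] (Fin (d i) → ℂ) where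
  toFun v := fun x => v (Function.update a i x)
  map_add' _ _ := rfl
  map_smul' _ _ := rfl

/-- The tensor product `⊗ᵢ tᵢ` of local subspaces, as a subspace of the global space:
the set of vectors all of whose single-site slices lie in the local subspaces. -/
noncomputable def tensorSub (d : Fin N → ℕ) (t : ∀ i, Submodule ℂ (Fin (d i) → ℂ)) :
    Submodule ℂ (Idx d → ℂ) :=
  ⨅ i, ⨅ a : Idx d, (t i).comap (sliceAt d i a)

open Classical in
/-- The operator `X` on the `j`-th factor, amplified by the identity on all other factors. -/
noncomputable def factorMat {M : ℕ} (m : Fin M → ℕ) (j : Fin M)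
    (X : Matrix (Fin (m j)) (Fin (m j)) ℂ) :
    Matrix (∀ l, Fin (m l)) (∀ l, Fin (m l)) ℂ :=
  fun a b => if (∀ l, l ≠ j → a l = b l) then X (a j) (b j) else 0

/-- Partial trace onto a single site `i`. -/
noncomputable def ptrace1 (d : Fin N → ℕ) (i : Fin N) (M : Matrix (Idx d) (Idx d) ℂ) :
    Matrix (Fin (d i)) (Fin (d i)) ℂ :=
  fun x y => ∑ a : Idx d, if a i = x then M a (Function.update a i y) else 0

/-- Local support `H̃ᵢ`: the range of the single-site reduced state of `ψ`. -/
noncomputable def localSupp (d : Fin N → ℕ) (ψ : Idx d → ℂ) (i : Fin N) :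
    Submodule ℂ (Fin (d i) → ℂ) :=
  LinearMap.range (Matrix.mulVecLin (ptrace1 d i (proj d ψ)))

/-- Set of skew-Hermitian matrices commuting with `|ψ⟩⟨ψ|` (the Lie algebra `u_ψ`). -/
noncomputable def stabSet (d : Fin N → ℕ) (ψ : Idx d → ℂ) :
    Set (Matrix (Idx d) (Idx d) ℂ) :=
  {X | Xᴴ = -X ∧ X * proj d ψ = proj d ψ * X}

/-- The Lie algebra `u_{𝒩ₖ,ψ}` of skew-Hermitian stabilizers acting only on `S`. -/
noncomputable def nstabSet (d : Fin N → ℕ) (S : Finset (Fin N)) (ψ : Idx d → ℂ) :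
    Set (Matrix (Idx d) (Idx d) ℂ) :=
  {X | (Xᴴ = -X ∧ X * proj d ψ = proj d ψ * X) ∧ ActsOn d S X}

attribute [local instance 100] LieRing.ofAssociativeRing

/-- The unitary generation property: the real Lie algebra generated by the
neighborhood stabilizer algebras is the full stabilizer algebra `u_ψ`. -/
noncomputable def UnitaryGenProp (d : Fin N → ℕ) {K : ℕ} (𝒩 : Fin K → Finset (Fin N))
    (ψ : Idx d → ℂ) : Prop :=
  ((LieSubalgebra.lieSpan ℝ (Matrix (Idx d) (Idx d) ℂ)
      (⋃ k, nstabSet d (𝒩 k) ψ)) : Set (Matrix (Idx d) (Idx d) ℂ)) = stabSet d ψ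

/-- The unitary stabilizer group `U_ψ` (as a set of matrices). -/
noncomputable def uStab (d : Fin N → ℕ) (ψ : Idx d → ℂ) : Set (Matrix (Idx d) (Idx d) ℂ) :=
  {U | U ∈ Matrix.unitaryGroup (Idx d) ℂ ∧ U * proj d ψ * Uᴴ = proj d ψ}

/-- The neighborhood unitary stabilizer group `U_{𝒩ₖ,ψ}` (as a set of matrices). -/
noncomputable def uNStab (d : Fin N → ℕ) (S : Finset (Fin N)) (ψ : Idx d → ℂ) :
    Set (Matrix (Idx d) (Idx d) ℂ) :=
  {U | (U ∈ Matrix.unitaryGroup (Idx d) ℂ ∧ U * proj d ψ * Uᴴ = proj d ψ) ∧ ActsOn d S U}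

/-- `x log x` with the convention `0 log 0 = 0`. -/
noncomputable def entAux (x : ℝ) : ℝ := if x = 0 then 0 else x * Real.log x

open Classical in
/-- Von Neumann entropy of a (Hermitian) matrix. -/
noncomputable def vnEntropy {n : Type*} [Fintype n] [DecidableEq n]
    (σ : Matrix n n ℂ) : ℝ :=
  if h : σ.IsHermitian then -∑ i, entAux (h.eigenvalues i) else 0

/-!
Fix `k` and let `W = ⋂_{j ≠ k} Σ̄_{𝒩ⱼ}(ψ)`. A map on `𝒩ⱼ` fixing `|ψ⟩⟨ψ|` has Kraus operators with
eigenvector `ψ`; acting only on `𝒩ⱼ`, each of them acts on all of `Σ̄_{𝒩ⱼ}(ψ)` by the same scalar,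
so for `v ∈ W` the maps on `𝒩ⱼ`, `j ≠ k`, fix `|v⟩⟨ψ|`, while the maps on `𝒩ₖ` preserve the partial
trace `Tr_{𝒩ₖ}`. Ordering the maps so that those on `𝒩ₖ` act last, robustness gives
`Tr_{𝒩ₖ} |v⟩⟨ψ| = ⟨ψ, v⟩ Tr_{𝒩ₖ} |ψ⟩⟨ψ|`, i.e. `v - ⟨ψ, v⟩ ψ ⊥ Σ̄_{𝒩ₖ}(ψ)`. Hence
`Π_k Π_k̄ = |ψ⟩⟨ψ|`, which is self-adjoint, so `Π_k` and `Π_k̄` commute.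
-/

open Matrix

section Slicing

variable {d : Fin N → ℕ} (S : Finset (Fin N))

def mergeEquiv : SIdx d S × SIdx d Sᶜ ≃ Idx d where
  toFun p := merge d S p.1 p.2
  invFun a := (fun i => a i, fun i => a i)
  left_inv p := by
    ext i
    · simp [merge, i.2]
    · simp [merge, Finset.mem_compl.mp i.2]
  right_inv a := by
    funext i
    by_cases h : i ∈ S <;> simp [merge, h]

theorem merge_left_injective (w : SIdx d Sᶜ) : Function.Injective (merge d S · w) :=
  fun u u' h => congrArg Prod.fst ((mergeEquiv S).injective (a₁ := (u, w)) (a₂ := (u', w)) h)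

theorem sum_idx_eq_sum_merge {M : Type*} [AddCommMonoid M] (f : Idx d → M) :
    ∑ a, f a = ∑ w : SIdx d Sᶜ, ∑ u : SIdx d S, f (merge d S u w) := by
  rw [← (mergeEquiv S).sum_comp, Fintype.sum_prod_type, Finset.sum_comm]
  rfl

theorem ext_sliceMap {x y : Idx d → ℂ} (h : ∀ w, sliceMap d S w x = sliceMap d S w y) :
    x = y := by
  funext a
  obtain ⟨⟨u, w⟩, rfl⟩ := (mergeEquiv S).surjective a
  exact congrFun (h w) u

theorem dotProduct_eq_sum_sliceMap (x y : Idx d → ℂ) :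
    x ⬝ᵥ y = ∑ w, sliceMap d S w x ⬝ᵥ sliceMap d S w y :=
  sum_idx_eq_sum_merge S _

def block (M : Matrix (Idx d) (Idx d) ℂ) (w w' : SIdx d Sᶜ) : Matrix (SIdx d S) (SIdx d S) ℂ :=
  M.submatrix (merge d S · w) (merge d S · w')

theorem block_sum {ι : Type*} (s : Finset ι) (M : ι → Matrix (Idx d) (Idx d) ℂ)
    (w w' : SIdx d Sᶜ) : block S (∑ i ∈ s, M i) w w' = ∑ i ∈ s, block S (M i) w w' := by
  ext u u'
  simp [block, Matrix.sum_apply]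

theorem block_conjTranspose (M : Matrix (Idx d) (Idx d) ℂ) (w w' : SIdx d Sᶜ) :
    block S Mᴴ w w' = (block S M w' w)ᴴ :=
  (conjTranspose_submatrix _ _ _).symm

theorem block_one (w : SIdx d Sᶜ) : block S 1 w w = 1 :=
  submatrix_one _ (merge_left_injective S w)

theorem block_mul (A B : Matrix (Idx d) (Idx d) ℂ) (w w' : SIdx d Sᶜ) :
    block S (A * B) w w' = ∑ w'', block S A w w'' * block S B w'' w' := by
  ext u u'
  simp only [block, submatrix_apply, mul_apply, Matrix.sum_apply]
  exact sum_idx_eq_sum_merge S _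

theorem sliceMap_mulVec (A : Matrix (Idx d) (Idx d) ℂ) (x : Idx d → ℂ) (w : SIdx d Sᶜ) :
    sliceMap d S w (A *ᵥ x) = ∑ w', block S A w w' *ᵥ sliceMap d S w' x := by
  funext u
  simp only [sliceMap, LinearMap.coe_mk, AddHom.coe_mk, mulVec, dotProduct, Finset.sum_apply,
    block, submatrix_apply]
  exact sum_idx_eq_sum_merge S _

theorem actsOn_iff_block {X : Matrix (Idx d) (Idx d) ℂ} :
    ActsOn d S X ↔ ∃ Y, ∀ w w', block S X w w' = if w = w' then Y else 0 := by
  refine exists_congr fun Y => ⟨fun h w w' => ?_, fun h u u' w w' => ?_⟩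
  · ext u u'
    rw [block, submatrix_apply, h]
    split_ifs <;> rfl
  · have := congrFun₂ (h w w') u u'
    rw [block, submatrix_apply] at this
    rw [this]
    split_ifs <;> rfl

end Slicing

section Gram

variable {n ι : Type*} [Fintype n] [Fintype ι]

theorem range_mulVecLin_sum_vecMulVec_star (x : ι → n → ℂ) :
    LinearMap.range (∑ i, vecMulVec (x i) (star (x i))).mulVecLin =
      Submodule.span ℂ (Set.range x) := by
  set B : Matrix n ι ℂ := of fun a i => x i a
  have hB : ∑ i, vecMulVec (x i) (star (x i)) = B * Bᴴ := by
    ext a b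
    simp [B, mul_apply, vecMulVec_apply, Matrix.sum_apply]
  have hle : LinearMap.range (B * Bᴴ).mulVecLin ≤ LinearMap.range B.mulVecLin := by
    rintro _ ⟨z, rfl⟩
    exact ⟨Bᴴ *ᵥ z, by simp [mulVec_mulVec]⟩
  rw [hB, Submodule.eq_of_le_of_finrank_le hle (rank_self_mul_conjTranspose B).ge,
    range_mulVecLin]
  rfl

theorem exists_smul_of_sum_vecMulVec_star_eq {x : ι → n → ℂ} {ψ : n → ℂ}
    (hψ : star ψ ⬝ᵥ ψ = 1) (h : ∑ i, vecMulVec (x i) (star (x i)) = vecMulVec ψ (star ψ)) :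
    ∃ c : ι → ℂ, (∀ i, x i = c i • ψ) ∧ ∑ i, c i * star (c i) = 1 := by
  have hspan : Submodule.span ℂ (Set.range x) = ℂ ∙ ψ := by
    rw [← range_mulVecLin_sum_vecMulVec_star, h]
    simpa using range_mulVecLin_sum_vecMulVec_star fun _ : Unit => ψ
  choose c hc using fun i =>
    Submodule.mem_span_singleton.1 (hspan ▸ Submodule.subset_span ⟨i, rfl⟩ : x i ∈ ℂ ∙ ψ)
  refine ⟨c, fun i => (hc i).symm, ?_⟩
  have htr := congrArg trace h
  simp only [← hc, star_smul, smul_vecMulVec, vecMulVec_smul, smul_smul, ← Finset.sum_smul,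
    trace_smul, trace_vecMulVec, dotProduct_comm ψ, hψ, smul_eq_mul, mul_one] at htr
  simpa [mul_comm] using htr

end Gram

section SchmidtSpan

variable {d : Fin N → ℕ} (S : Finset (Fin N)) (ψ : Idx d → ℂ)

theorem proj_eq_vecMulVec : proj d ψ = vecMulVec ψ (star ψ) := rfl

theorem ptrace_proj_eq_sum :
    ptrace d S (proj d ψ) =
      ∑ w, vecMulVec (sliceMap d S w ψ) (star (sliceMap d S w ψ)) := by
  ext u u'
  simp [ptrace, proj, Matrix.sum_apply, vecMulVec_apply, sliceMap]

theorem schmidtSpan_eq_span_sliceMap :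
    schmidtSpan d S ψ = Submodule.span ℂ (Set.range fun w => sliceMap d S w ψ) := by
  rw [schmidtSpan, ptrace_proj_eq_sum, range_mulVecLin_sum_vecMulVec_star]

variable {S ψ}

theorem mem_extSchmidtSpan_iff {v : Idx d → ℂ} :
    v ∈ extSchmidtSpan d S ψ ↔ ∀ w, sliceMap d S w v ∈ schmidtSpan d S ψ := by
  simp [extSchmidtSpan, Submodule.mem_iInf]

variable (S ψ)

theorem self_mem_extSchmidtSpan : ψ ∈ extSchmidtSpan d S ψ :=
  mem_extSchmidtSpan_iff.2 fun w =>
    (schmidtSpan_eq_span_sliceMap S ψ).ge (Submodule.subset_span ⟨w, rfl⟩)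

end SchmidtSpan

section NeighborhoodMaps

variable {d : Fin N → ℕ} {S : Finset (Fin N)} {ψ : Idx d → ℂ}

theorem sliceMap_mulVec_of_block {X : Matrix (Idx d) (Idx d) ℂ}
    {Y : Matrix (SIdx d S) (SIdx d S) ℂ} (hY : ∀ w w', block S X w w' = if w = w' then Y else 0)
    (x : Idx d → ℂ) (w : SIdx d Sᶜ) :
    sliceMap d S w (X *ᵥ x) = Y *ᵥ sliceMap d S w x := by
  rw [sliceMap_mulVec, Finset.sum_eq_single w (fun w' _ h => by simp [hY, Ne.symm h]) (by simp),
    hY, if_pos rfl]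

theorem mulVec_eq_smul_of_actsOn {X : Matrix (Idx d) (Idx d) ℂ} (hX : ActsOn d S X) {c : ℂ}
    (hψ : X *ᵥ ψ = c • ψ) {v : Idx d → ℂ} (hv : v ∈ extSchmidtSpan d S ψ) :
    X *ᵥ v = c • v := by
  obtain ⟨Y, hY⟩ := (actsOn_iff_block S).1 hX
  have hYψ : ∀ y ∈ schmidtSpan d S ψ, Y *ᵥ y = c • y := by
    intro y hy
    rw [schmidtSpan_eq_span_sliceMap, Submodule.mem_span_range_iff_exists_fun] at hy
    obtain ⟨a, rfl⟩ := hy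
    simp [mulVec_sum, mulVec_smul, ← sliceMap_mulVec_of_block hY, hψ, Finset.smul_sum,
      smul_comm c]
  refine ext_sliceMap S fun w => ?_
  rw [sliceMap_mulVec_of_block hY, hYψ _ (mem_extSchmidtSpan_iff.1 hv w), map_smul]

theorem mul_vecMulVec_star_mul_conjTranspose {n : Type*} [Fintype n] (M : Matrix n n ℂ)
    (x y : n → ℂ) : M * vecMulVec x (star y) * Mᴴ = vecMulVec (M *ᵥ x) (star (M *ᵥ y)) := by
  rw [mul_vecMulVec, vecMulVec_mul, star_mulVec]

theorem IsNeighborhoodMap.map_vecMulVec_star_of_mem {E : Sop d} (hE : IsNeighborhoodMap d S E)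
    (hψ : star ψ ⬝ᵥ ψ = 1) (hfix : E (proj d ψ) = proj d ψ) {v : Idx d → ℂ}
    (hv : v ∈ extSchmidtSpan d S ψ) : E (vecMulVec v (star ψ)) = vecMulVec v (star ψ) := by
  obtain ⟨m, K, hK, hKraus, -⟩ := hE
  obtain ⟨c, hc, hsum⟩ := exists_smul_of_sum_vecMulVec_star_eq (x := fun i => K i *ᵥ ψ) hψ
    (by simpa [hKraus, mul_vecMulVec_star_mul_conjTranspose, proj_eq_vecMulVec] using hfix)
  have hKv i : K i *ᵥ v = c i • v := mulVec_eq_smul_of_actsOn (hK i) (hc i) hv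
  simpa [hKraus, mul_vecMulVec_star_mul_conjTranspose, hKv, hc, star_smul, smul_vecMulVec,
    vecMulVec_smul, smul_smul, ← Finset.sum_smul, mul_comm]
    using congrArg (· • vecMulVec v (star ψ)) hsum

end NeighborhoodMaps

section TraceOut

variable {d : Fin N → ℕ} (S : Finset (Fin N))

/-- The partial trace `Tr_S` over the subsystems in `S` (whereas `ptrace d S` is `Tr_{Sᶜ}`). -/
noncomputable def traceOut :
    Matrix (Idx d) (Idx d) ℂ →ₗ[ℂ] Matrix (SIdx d Sᶜ) (SIdx d Sᶜ) ℂ where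
  toFun M := of fun w w' => (block S M w w').trace
  map_add' M M' := by ext; simp [block, submatrix_add, trace_add]
  map_smul' c M := by ext; simp [block, submatrix_smul, trace_smul]

theorem traceOut_apply (M : Matrix (Idx d) (Idx d) ℂ) (w w' : SIdx d Sᶜ) :
    traceOut S M w w' = (block S M w w').trace := rfl

variable {S}

theorem IsNeighborhoodMap.traceOut_map {E : Sop d} (hE : IsNeighborhoodMap d S E)
    (ρ : Matrix (Idx d) (Idx d) ℂ) : traceOut S (E ρ) = traceOut S ρ := by
  obtain ⟨m, K, hK, hKraus, hTP⟩ := hE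
  choose Y hY using fun i => (actsOn_iff_block S).1 (hK i)
  have hYH i w w' : block S (K i)ᴴ w w' = if w = w' then (Y i)ᴴ else 0 := by
    rw [block_conjTranspose, hY]
    by_cases h : w = w'
    · simp [h]
    · simp [h, Ne.symm h]
  have hconj i w w' : block S (K i * ρ * (K i)ᴴ) w w' = Y i * block S ρ w w' * (Y i)ᴴ := by
    simp [block_mul, hY, hYH]
  ext w w'
  have hYY : ∑ i, (Y i)ᴴ * Y i = 1 := by
    simpa [block_sum, block_mul, hY, hYH, block_one] using congrArg (block S · w w) hTP
  calc traceOut S (E ρ) w w' = ∑ i, (Y i * block S ρ w w' * (Y i)ᴴ).trace := by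
        rw [traceOut_apply, hKraus, block_sum, trace_sum]
        simp only [hconj]
    _ = ((∑ i, (Y i)ᴴ * Y i) * block S ρ w w').trace := by
        rw [Finset.sum_mul, trace_sum]
        exact Finset.sum_congr rfl fun i _ => trace_mul_cycle _ _ _
    _ = traceOut S ρ w w' := by rw [hYY, one_mul, traceOut_apply]

end TraceOut

section Preparation

theorem vecMulVec_star_polarization {n : Type*} (x y : n → ℂ) :
    vecMulVec x (star y) = (4⁻¹ : ℂ) • (vecMulVec (x + y) (star (x + y))
      - vecMulVec (x - y) (star (x - y))
      + Complex.I • vecMulVec (x + Complex.I • y) (star (x + Complex.I • y))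
      - Complex.I • vecMulVec (x - Complex.I • y) (star (x - Complex.I • y))) := by
  ext a b
  simp only [vecMulVec_apply, Matrix.smul_apply, Matrix.add_apply, Matrix.sub_apply,
    Pi.add_apply, Pi.sub_apply, Pi.smul_apply, Pi.star_apply, star_add, star_sub, star_smul,
    smul_eq_mul, Complex.star_def, Complex.conj_I]
  ring_nf
  rw [Complex.I_sq]
  ring

theorem map_vecMulVec_star_eq_zero {n M : Type*} [AddCommGroup M] [Module ℂ M]
    (Ψ : Matrix n n ℂ →ₗ[ℂ] M) (h : ∀ z, Ψ (vecMulVec z (star z)) = 0) (x y : n → ℂ) :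
    Ψ (vecMulVec x (star y)) = 0 := by
  rw [vecMulVec_star_polarization]
  simp only [map_smul, map_sub, map_add, h, smul_zero, sub_zero, add_zero]

variable {d : Fin N → ℕ}

theorem isDensity_smul_vecMulVec_star {z : Idx d → ℂ} (hz : z ≠ 0) :
    IsDensity d ((star z ⬝ᵥ z)⁻¹ • vecMulVec z (star z)) := by
  have hpos : 0 < star z ⬝ᵥ z := dotProduct_star_self_pos_iff.2 hz
  refine ⟨(posSemidef_vecMulVec_self_star z).smul (inv_nonneg_of_nonneg hpos.le), ?_⟩
  rw [trace_smul, trace_vecMulVec, dotProduct_comm z, smul_eq_mul, inv_mul_cancel₀ hpos.ne']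

theorem map_vecMulVec_star_of_forall_density {Φ : Sop d} {ρ : Matrix (Idx d) (Idx d) ℂ}
    (hΦ : ∀ σ, IsDensity d σ → Φ σ = ρ) (x y : Idx d → ℂ) :
    Φ (vecMulVec x (star y)) = (star y ⬝ᵥ x) • ρ := by
  have key := map_vecMulVec_star_eq_zero (Φ - (traceLinearMap (Idx d) ℂ ℂ).smulRight ρ)
    (fun z => ?_) x y
  · simpa [sub_eq_zero, trace_vecMulVec, dotProduct_comm] using key
  rcases eq_or_ne z 0 with rfl | hz
  · simp
  have h := hΦ _ (isDensity_smul_vecMulVec_star hz)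
  rw [map_smul, inv_smul_eq_iff₀ (dotProduct_star_self_pos_iff.2 hz).ne'] at h
  simp [h, trace_vecMulVec, dotProduct_comm]

end Preparation

section SeqComp

variable {V : Type*} [AddCommMonoid V] [Module ℂ V]

theorem seqComp_apply_of_forall_eq :
    ∀ {T : ℕ} (g : Fin T → V →ₗ[ℂ] V) {X : V}, (∀ i, g i X = X) → seqComp g X = X
  | 0, _, _, _ => rfl
  | T + 1, g, X, h => by
    change g (Fin.last T) (seqComp (fun t => g t.castSucc) X) = X
    rw [seqComp_apply_of_forall_eq _ fun i => h _, h]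

theorem apply_seqComp_of_monotone {α : Type*} :
    ∀ {T : ℕ} (g : Fin T → V →ₗ[ℂ] V) (p : Fin T → Bool), Monotone p → ∀ {X : V} (f : V → α),
      (∀ i, p i = false → g i X = X) → (∀ i, p i = true → ∀ Y, f (g i Y) = f Y) →
      f (seqComp g X) = f X
  | 0, _, _, _, _, _, _, _ => rfl
  | T + 1, g, p, hp, X, f, hfix, hf => by
    cases hlast : p (Fin.last T)
    · rw [seqComp_apply_of_forall_eq g fun i =>
        hfix i (Bool.eq_false_of_le_false (hlast ▸ hp (Fin.le_last i)))]
    · change f (g (Fin.last T) (seqComp (fun t => g t.castSucc) X)) = f X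
      rw [hf _ hlast]
      exact apply_seqComp_of_monotone _ _ (hp.comp Fin.strictMono_castSucc.monotone) f
        (fun _ => hfix _) (fun _ => hf _)

end SeqComp

section Projections

variable {ι : Type*} [Fintype ι] [DecidableEq ι] {P : Matrix ι ι ℂ} {V : Submodule ℂ (ι → ℂ)}

theorem IsOrthProjOnto.mulVec_of_mem (hP : IsOrthProjOnto P V) {x : ι → ℂ} (hx : x ∈ V) :
    P *ᵥ x = x := by
  obtain ⟨z, rfl⟩ := hP.2.2 ▸ hx
  simp [mulVec_mulVec, hP.2.1]

theorem IsOrthProjOnto.mulVec_eq_zero (hP : IsOrthProjOnto P V) {x : ι → ℂ}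
    (hx : ∀ y ∈ V, star y ⬝ᵥ x = 0) : P *ᵥ x = 0 := by
  have hPx : P *ᵥ x ∈ V := hP.2.2 ▸ ⟨x, rfl⟩
  have hself : star (P *ᵥ x) ⬝ᵥ P *ᵥ x = star (P *ᵥ x) ⬝ᵥ x := by
    rw [star_mulVec, ← dotProduct_mulVec, ← dotProduct_mulVec, mulVec_mulVec, hP.1, hP.2.1]
  exact dotProduct_star_self_eq_zero.1 (hself.trans (hx _ hPx))

end Projections

section Stabilization

variable {d : Fin N → ℕ} {S : Finset (Fin N)} {ψ : Idx d → ℂ}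

theorem star_dotProduct_eq_zero_of_traceOut_eq_zero {r : Idx d → ℂ}
    (hr : traceOut S (vecMulVec r (star ψ)) = 0) {y : Idx d → ℂ}
    (hy : y ∈ extSchmidtSpan d S ψ) : star y ⬝ᵥ r = 0 := by
  have hslice w w' : star (sliceMap d S w' ψ) ⬝ᵥ sliceMap d S w r = 0 := by
    rw [dotProduct_comm]
    exact congrFun₂ hr w w'
  rw [dotProduct_eq_sum_sliceMap S]
  refine Finset.sum_eq_zero fun w _ => ?_
  obtain ⟨a, ha⟩ := (Submodule.mem_span_range_iff_exists_fun ℂ).1 <|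
    schmidtSpan_eq_span_sliceMap S ψ ▸ mem_extSchmidtSpan_iff.1 hy w
  change star (sliceMap d S w y) ⬝ᵥ _ = 0
  simp [← ha, star_sum, sum_dotProduct, smul_dotProduct, hslice]

theorem IsOrthProjOnto.mulVec_eq_smul_of_traceOut {P : Matrix (Idx d) (Idx d) ℂ}
    (hP : IsOrthProjOnto P (extSchmidtSpan d S ψ)) {v : Idx d → ℂ} {c : ℂ}
    (h : traceOut S (vecMulVec v (star ψ)) = c • traceOut S (proj d ψ)) :
    P *ᵥ v = c • ψ := by
  have hr : traceOut S (vecMulVec (v - c • ψ) (star ψ)) = 0 := by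
    rw [sub_vecMulVec, smul_vecMulVec, map_sub, map_smul, h, proj_eq_vecMulVec, sub_self]
  have := hP.mulVec_eq_zero fun y hy => star_dotProduct_eq_zero_of_traceOut_eq_zero hr hy
  rwa [mulVec_sub, mulVec_smul, hP.mulVec_of_mem (self_mem_extSchmidtSpan S ψ),
    sub_eq_zero] at this

theorem RFTS.traceOut_vecMulVec_star {K : ℕ} {𝒩 : Fin K → Finset (Fin N)}
    (hR : RFTS d 𝒩 ψ) (hψ : star ψ ⬝ᵥ ψ = 1) (k : Fin K) {v : Idx d → ℂ}
    (hv : ∀ j ≠ k, v ∈ extSchmidtSpan d (𝒩 j) ψ) :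
    traceOut (𝒩 k) (vecMulVec v (star ψ)) = (star ψ ⬝ᵥ v) • traceOut (𝒩 k) (proj d ψ) := by
  obtain ⟨T, E, hN, hfix, hprep⟩ := hR
  choose κ hκ using hN
  set p : Fin T → Bool := fun t => decide (κ t = k)
  have := apply_seqComp_of_monotone (fun t => E (Tuple.sort p t)) (p ∘ Tuple.sort p)
    (Tuple.monotone_sort p) (X := vecMulVec v (star ψ)) (traceOut (𝒩 k))
    (fun t ht => (hκ _).map_vecMulVec_star_of_mem hψ (hfix _) (hv _ (by simpa [p] using ht)))
    (fun t ht => by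
      obtain h : κ (Tuple.sort p t) = k := by simpa [p] using ht
      exact (h ▸ hκ _).traceOut_map)
  rw [← this, map_vecMulVec_star_of_forall_density (hprep _), map_smul]

theorem IsUnitVec.star_dotProduct_self (hψ : IsUnitVec d ψ) : star ψ ⬝ᵥ ψ = 1 := by
  simp only [dotProduct, Pi.star_apply, Complex.star_def, ← Complex.normSq_eq_conj_mul_self]
  exact_mod_cast hψ

end Stabilization

/-- Proposition 6, commuting projectors: if `ψ` is RFTS with respect to
`𝒩`, then for each `k` the orthogonal projection onto `Σ̄_{𝒩ₖ}(ψ)` commutes with the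
orthogonal projection onto `⋂_{j≠k} Σ̄_{𝒩ⱼ}(ψ)`. -/
theorem rfts_commuting_projectors {N K : ℕ} (d : Fin N → ℕ)
    (𝒩 : Fin K → Finset (Fin N)) (ψ : Idx d → ℂ) (hunit : IsUnitVec d ψ)
    (hRFTS : RFTS d 𝒩 ψ) :
    ∀ k : Fin K, ∀ P Q : Matrix (Idx d) (Idx d) ℂ,
      IsOrthProjOnto P (extSchmidtSpan d (𝒩 k) ψ) →
      IsOrthProjOnto Q (⨅ j : Fin K, ⨅ _ : j ≠ k, extSchmidtSpan d (𝒩 j) ψ) →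
      P * Q = Q * P := by
  intro k P Q hP hQ
  have hP_range x : P *ᵥ (Q *ᵥ x) = (star ψ ⬝ᵥ Q *ᵥ x) • ψ := by
    refine hP.mulVec_eq_smul_of_traceOut
      (hRFTS.traceOut_vecMulVec_star hunit.star_dotProduct_self k ?_)
    have hx : Q *ᵥ x ∈ ⨅ j : Fin K, ⨅ _ : j ≠ k, extSchmidtSpan d (𝒩 j) ψ :=
      hQ.2.2 ▸ LinearMap.mem_range_self Q.mulVecLin x
    simpa [Submodule.mem_iInf] using hx
  have hQψ : Q *ᵥ ψ = ψ :=
    hQ.mulVec_of_mem (by simp [Submodule.mem_iInf, self_mem_extSchmidtSpan])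
  have hPQ : P * Q = proj d ψ := by
    have hψQ : star ψ ᵥ* Q = star ψ := by
      conv_lhs => rw [← hQ.1]
      rw [← star_mulVec, hQψ]
    refine ext_of_mulVec_single fun b => ?_
    rw [← mulVec_mulVec, hP_range, dotProduct_mulVec, hψQ, proj_eq_vecMulVec, vecMulVec_mulVec,
      op_smul_eq_smul]
  rw [hPQ, ← hP.1, ← hQ.1, ← conjTranspose_mul, hPQ, proj_eq_vecMulVec, conjTranspose_vecMulVec,
    star_star]

end QLS
end

section
/- Let ψ ∈ H be a unit vector that is RFTS with respect to a neighborhood structure 𝒩, let A ⊆ {1,…,N}, and let A^𝒩 = ⋃{𝒩_k ∈ 𝒩 : 𝒩_k ∩ A ≠ ∅} be its neighborhood expansion. Then for every CPTP map M on H whose Kraus operators act only on A, there exist finitely many CPTP maps E_1,…,E_l, each an 𝒩_k-neighborhood map for some 𝒩_k ∈ 𝒩 with 𝒩_k ∩ A ≠ ∅ (hence 𝒩_k ⊆ A^𝒩, so each acts only on A^𝒩), such that (E_l ∘ ⋯ ∘ E_1 ∘ M)(|ψ⟩⟨ψ|) = |ψ⟩⟨ψ|. (Recoverability: any quasi-local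 perturbation of the target state can be corrected by neighborhood maps supported on the neighborhood expansion of the perturbed region.) -/
open scoped BigOperators Matrix ComplexOrder

namespace QLS

variable {N : ℕ}

attribute [local instance] LieRing.ofAssociativeRing

/-!
Kraus operators supported on disjoint sets of sites commute, so every map of the RFTS
protocol whose neighborhood misses `A` commutes with `M` and hence fixes the density matrix
`M(|ψ⟩⟨ψ|)`. Robustness lets us run those maps first; the remaining ones, all supported on
neighborhoods meeting `A`, then carry `M(|ψ⟩⟨ψ|)` to `|ψ⟩⟨ψ|`.
-/

section ActsOn

variable {d : Fin N → ℕ} {S A : Finset (Fin N)}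

theorem merge_restrict (a : Idx d) : merge d S (fun i => a i) (fun i => a i) = a := by
  funext i; by_cases h : i ∈ S <;> simp [merge, h]

theorem ActsOn.exists_apply_eq {X : Matrix (Idx d) (Idx d) ℂ} (hX : ActsOn d S X) :
    ∃ Y : Matrix (SIdx d S) (SIdx d S) ℂ, ∀ a b : Idx d,
      X a b = if ∀ i ∉ S, a i = b i then Y (fun i => a i) (fun i => b i) else 0 := by
  obtain ⟨Y, hY⟩ := hX
  refine ⟨Y, fun a b => ?_⟩
  have h := hY (fun i => a i) (fun i => b i) (fun i => a i) (fun i => b i)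
  rw [merge_restrict, merge_restrict] at h
  rw [h]
  refine if_congr ⟨fun he i hi => congrFun he ⟨i, Finset.mem_compl.mpr hi⟩, fun h => ?_⟩ rfl rfl
  exact funext fun i => h i (Finset.mem_compl.mp i.2)

/-- The only intermediate index contributing to `(X * Y) a b` agrees with `b` on `S` and with
`a` elsewhere. -/
theorem mul_apply_of_disjoint {X Y : Matrix (Idx d) (Idx d) ℂ}
    {XS : Matrix (SIdx d S) (SIdx d S) ℂ} {YA : Matrix (SIdx d A) (SIdx d A) ℂ}
    (hX : ∀ a b : Idx d, X a b = if ∀ i ∉ S, a i = b i then XS (fun i => a i) (fun i => b i) else 0)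
    (hY : ∀ a b : Idx d, Y a b = if ∀ i ∉ A, a i = b i then YA (fun i => a i) (fun i => b i) else 0)
    (hSA : Disjoint S A) (a b : Idx d) :
    (X * Y) a b = if ∀ i ∉ S, i ∉ A → a i = b i then
      XS (fun i => a i) (fun i => b i) * YA (fun i => a i) (fun i => b i) else 0 := by
  classical
  set c : Idx d := S.piecewise b a
  have hcS : ∀ i ∈ S, c i = b i := fun i hi => S.piecewise_eq_of_mem _ _ hi
  have hcA : ∀ i ∉ S, c i = a i := fun i hi => S.piecewise_eq_of_notMem _ _ hi
  have hzero : ∀ c' ∈ Finset.univ, c' ≠ c → X a c' * Y c' b = 0 := by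
    intro c' _ hc'
    have hne : ¬ ((∀ i ∉ S, a i = c' i) ∧ ∀ i ∉ A, c' i = b i) := by
      rintro ⟨h₁, h₂⟩
      refine hc' (funext fun i => ?_)
      by_cases hi : i ∈ S
      · rw [hcS i hi, h₂ i (Finset.disjoint_left.mp hSA hi)]
      · rw [hcA i hi, h₁ i hi]
    rw [hX, hY]
    split_ifs <;> simp_all
  have hcond : (∀ i ∉ A, c i = b i) ↔ ∀ i ∉ S, i ∉ A → a i = b i := by
    refine ⟨fun h i hS hA => hcA i hS ▸ h i hA, fun h i hA => ?_⟩
    by_cases hS : i ∈ S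
    · exact hcS i hS
    · exact (hcA i hS).trans (h i hS hA)
  have hcS' : (fun i : S => c i) = fun i : S => b i := funext fun i => hcS i i.2
  have hcA' : (fun i : A => c i) = fun i : A => a i :=
    funext fun i => hcA i (Finset.disjoint_right.mp hSA i.2)
  rw [Matrix.mul_apply, Finset.sum_eq_single_of_mem c (Finset.mem_univ _) hzero, hX, hY,
    if_pos fun i hi => (hcA i hi).symm, hcS', hcA', if_congr hcond rfl rfl]
  split_ifs <;> simp

theorem ActsOn.commute {X Y : Matrix (Idx d) (Idx d) ℂ} (hX : ActsOn d S X) (hY : ActsOn d A Y)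
    (hSA : Disjoint S A) : Commute X Y := by
  obtain ⟨XS, hXS⟩ := hX.exists_apply_eq
  obtain ⟨YA, hYA⟩ := hY.exists_apply_eq
  ext a b
  rw [mul_apply_of_disjoint hXS hYA hSA, mul_apply_of_disjoint hYA hXS hSA.symm]
  exact if_congr ⟨fun h i hA hS => h i hS hA, fun h i hS hA => h i hA hS⟩ (mul_comm _ _) rfl

end ActsOn

section Kraus

theorem kraus_sum_comm {n : Type*} [Fintype n] {m m' : ℕ} (K : Fin m → Matrix n n ℂ)
    (L : Fin m' → Matrix n n ℂ) (hKL : ∀ i j, Commute (K i) (L j)) (ρ : Matrix n n ℂ) :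
    ∑ i, K i * (∑ j, L j * ρ * (L j)ᴴ) * (K i)ᴴ =
      ∑ j, L j * (∑ i, K i * ρ * (K i)ᴴ) * (L j)ᴴ := by
  have hterm : ∀ i j, K i * (L j * ρ * (L j)ᴴ) * (K i)ᴴ = L j * (K i * ρ * (K i)ᴴ) * (L j)ᴴ := by
    intro i j
    have hstar : (L j)ᴴ * (K i)ᴴ = (K i)ᴴ * (L j)ᴴ := by
      rw [← Matrix.conjTranspose_mul, ← Matrix.conjTranspose_mul, (hKL i j).eq]
    calc K i * (L j * ρ * (L j)ᴴ) * (K i)ᴴ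
        = (K i * L j) * ρ * ((L j)ᴴ * (K i)ᴴ) := by noncomm_ring
      _ = (L j * K i) * ρ * ((K i)ᴴ * (L j)ᴴ) := by rw [(hKL i j).eq, hstar]
      _ = L j * (K i * ρ * (K i)ᴴ) * (L j)ᴴ := by noncomm_ring
  simp_rw [Finset.mul_sum, Finset.sum_mul, hterm]
  exact Finset.sum_comm

variable {d : Fin N → ℕ}

theorem IsNeighborhoodMap.apply_comm {S A : Finset (Fin N)} {E F : Sop d}
    (hE : IsNeighborhoodMap d S E) (hF : IsNeighborhoodMap d A F) (hSA : Disjoint S A)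
    (ρ : Matrix (Idx d) (Idx d) ℂ) : E (F ρ) = F (E ρ) := by
  obtain ⟨m, K, hK, hE, -⟩ := hE
  obtain ⟨m', L, hL, hF, -⟩ := hF
  rw [hE, hF, hF, hE]
  exact kraus_sum_comm K L (fun i j => (hK i).commute (hL j) hSA) ρ

theorem IsNeighborhoodMap.isCPTP {S : Finset (Fin N)} {E : Sop d}
    (hE : IsNeighborhoodMap d S E) : IsCPTP d E :=
  let ⟨m, K, _, hE, hK⟩ := hE
  ⟨m, K, hE, hK⟩

theorem IsCPTP.isDensity_apply {E : Sop d} (hE : IsCPTP d E) {ρ : Matrix (Idx d) (Idx d) ℂ}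
    (hρ : IsDensity d ρ) : IsDensity d (E ρ) := by
  obtain ⟨m, K, hE, hK⟩ := hE
  rw [hE]
  refine ⟨Matrix.posSemidef_sum _ fun i _ => hρ.1.mul_mul_conjTranspose_same (K i), ?_⟩
  simp_rw [Matrix.trace_sum, Matrix.trace_mul_cycle (K _), ← Matrix.trace_sum, ← Finset.sum_mul,
    hK, Matrix.one_mul, hρ.2]

theorem isDensity_proj {ψ : Idx d → ℂ} (hψ : IsUnitVec d ψ) : IsDensity d (proj d ψ) := by
  have hproj : proj d ψ = Matrix.vecMulVec ψ (star ψ) := rfl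
  refine ⟨hproj ▸ Matrix.posSemidef_vecMulVec_self_star ψ, ?_⟩
  simp only [Matrix.trace, Matrix.diag, proj, Complex.mul_conj]
  rw [← Complex.ofReal_sum, hψ, Complex.ofReal_one]

end Kraus

section SeqComp

variable {V : Type*} [AddCommMonoid V] [Module ℂ V]

theorem seqComp_apply_eq_self {T : ℕ} (E : Fin T → V →ₗ[ℂ] V) {x : V} (h : ∀ t, E t x = x) :
    seqComp E x = x := by
  induction T with
  | zero => rfl
  | succ T ih =>
    show E (Fin.last T) (seqComp (fun t => E t.castSucc) x) = x
    rw [ih _ fun t => h t.castSucc, h]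

theorem seqComp_comp_cast {n m : ℕ} (h : n = m) (F : Fin m → V →ₗ[ℂ] V) :
    seqComp (fun i => F (Fin.cast h i)) = seqComp F := by
  subst h; rfl

theorem seqComp_append {a : ℕ} : ∀ (b : ℕ) (F : Fin (a + b) → V →ₗ[ℂ] V),
    seqComp F = (seqComp fun j : Fin b => F (Fin.natAdd a j)) ∘ₗ
      seqComp fun i : Fin a => F (Fin.castAdd b i)
  | 0, F => (LinearMap.id_comp _).symm
  | b + 1, F => by
    show F (Fin.last (a + b)) ∘ₗ seqComp (fun t : Fin (a + b) => F t.castSucc) = _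
    rw [seqComp_append b]
    rfl

theorem exists_perm_seqComp_eq_comp {T : ℕ} (E : Fin T → V →ₗ[ℂ] V) (p : Fin T → Prop) :
    ∃ (π : Equiv.Perm (Fin T)) (a b : ℕ) (f : Fin a → Fin T) (g : Fin b → Fin T),
      (∀ i, ¬ p (f i)) ∧ (∀ j, p (g j)) ∧
      seqComp (fun t => E (π t)) = seqComp (fun j => E (g j)) ∘ₗ seqComp fun i => E (f i) := by
  classical
  set a := Fintype.card {t // ¬ p t}
  set b := Fintype.card {t // p t}
  have hT : T = a + b := by
    have h := Fintype.card_congr (Equiv.sumCompl p)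
    rw [Fintype.card_sum, Fintype.card_fin] at h
    omega
  let σ : Fin (a + b) ≃ Fin T := finSumFinEquiv.symm.trans
    ((Equiv.sumCongr (Fintype.equivFin _).symm (Fintype.equivFin _).symm).trans
      ((Equiv.sumComm _ _).trans (Equiv.sumCompl p)))
  refine ⟨(finCongr hT).trans σ, a, b, fun i => σ (Fin.castAdd b i),
    fun j => σ (Fin.natAdd a j), fun i => ?_, fun j => ?_, ?_⟩
  · simpa [σ] using ((Fintype.equivFin _).symm i).2
  · simpa [σ] using ((Fintype.equivFin _).symm j).2
  · exact (seqComp_comp_cast hT _).trans (seqComp_append b fun s => E (σ s))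

theorem exists_seqComp_eq_of_forall_perm {T : ℕ} (E : Fin T → V →ₗ[ℂ] V) (p : Fin T → Prop)
    {x y : V} (hperm : ∀ π : Equiv.Perm (Fin T), seqComp (fun t => E (π t)) x = y)
    (hfix : ∀ t, ¬ p t → E t x = x) :
    ∃ (l : ℕ) (F : Fin l → V →ₗ[ℂ] V), (∀ j, ∃ t, p t ∧ F j = E t) ∧ seqComp F x = y := by
  obtain ⟨π, a, b, f, g, hf, hg, hπ⟩ := exists_perm_seqComp_eq_comp E p
  refine ⟨b, fun j => E (g j), fun j => ⟨g j, hg j, rfl⟩, ?_⟩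
  have h := hperm π
  rwa [hπ, LinearMap.comp_apply, seqComp_apply_eq_self _ fun i => hfix _ (hf i)] at h

end SeqComp

/-- Theorem 7(ii), recoverability: if `ψ` is RFTS with respect to `𝒩`
and `M` is a CPTP map whose Kraus operators act only on `A`, then `|ψ⟩⟨ψ|` can be
recovered from `M(|ψ⟩⟨ψ|)` by a finite sequence of neighborhood maps, each supported on a
neighborhood meeting `A` (hence contained in the neighborhood expansion `A^𝒩`). -/
theorem rfts_recoverability {N K : ℕ} (d : Fin N → ℕ)
    (𝒩 : Fin K → Finset (Fin N)) (ψ : Idx d → ℂ) (hunit : IsUnitVec d ψ)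
    (hRFTS : RFTS d 𝒩 ψ) (A : Finset (Fin N)) (M : Sop d)
    (hM : IsNeighborhoodMap d A M) :
    ∃ (l : ℕ) (E : Fin l → Sop d),
      (∀ t, ∃ k, (𝒩 k ∩ A).Nonempty ∧ IsNeighborhoodMap d (𝒩 k) (E t)) ∧
      seqComp E (M (proj d ψ)) = proj d ψ := by
  obtain ⟨T, E, hnbhd, hfixψ, hperm⟩ := hRFTS
  have hMψ : IsDensity d (M (proj d ψ)) := hM.isCPTP.isDensity_apply (isDensity_proj hunit)
  have hfix : ∀ t, ¬ (∃ k, (𝒩 k ∩ A).Nonempty ∧ IsNeighborhoodMap d (𝒩 k) (E t)) →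
      E t (M (proj d ψ)) = M (proj d ψ) := by
    intro t hmeet
    obtain ⟨k, hk⟩ := hnbhd t
    have hdisj : Disjoint (𝒩 k) A := Finset.disjoint_iff_inter_eq_empty.mpr
      (Finset.not_nonempty_iff_eq_empty.mp fun h => hmeet ⟨k, h, hk⟩)
    rw [hk.apply_comm hM hdisj, hfixψ t]
  obtain ⟨l, F, hF, hrec⟩ :=
    exists_seqComp_eq_of_forall_perm E _ (fun π => hperm π _ hMψ) hfix
  refine ⟨l, F, fun j => ?_, hrec⟩
  obtain ⟨t, hmeet, hFt⟩ := hF j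
  exact hFt ▸ hmeet

end QLS
end
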